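/- arXiv:math/0603187 — 3 statements merged into one kernel-verified Lean document; each statement's English description precedes it below -/
import Mathlib

section
/- For all nonnegative real numbers q, r, s and all λ, μ > 0 with λ + μ < 1, one has (q² + r² + s²)^{p/2} ≤ (1 - λ - μ)^{1-p} q^p + λ^{1-p} r^p + μ^{1-p} s^p, for any real p > 1. -/
/-!
Since `∑ xᵢ² ≤ (∑ xᵢ)²` for nonnegative `xᵢ`, the left-hand side is at most `(q + r + s) ^ p`.
Writing `q + r + s` as the convex combination of `q / (1 - λ - μ)`, `r / λ`, `s / μ` with weights
`1 - λ - μ`, `λ`, `μ`, Jensen's inequality for the convex function `t ↦ t ^ p` gives the claim.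
-/

open Finset

namespace Real

theorem rpow_sum_le_sum_rpow_one_sub_mul_rpow {ι : Type*} (s : Finset ι) {p : ℝ} (hp : 1 ≤ p)
    {w x : ι → ℝ} (hw : ∀ i ∈ s, 0 < w i) (hw₁ : ∑ i ∈ s, w i = 1) (hx : ∀ i ∈ s, 0 ≤ x i) :
    (∑ i ∈ s, x i) ^ p ≤ ∑ i ∈ s, w i ^ (1 - p) * x i ^ p := by
  have jensen := (convexOn_rpow hp).map_sum_le (fun i hi => (hw i hi).le) hw₁
    (p := fun i => x i / w i) fun i hi => div_nonneg (hx i hi) (hw i hi).le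
  calc (∑ i ∈ s, x i) ^ p = (∑ i ∈ s, w i • (x i / w i)) ^ p := by
        congr 1
        refine sum_congr rfl fun i hi => ?_
        rw [smul_eq_mul, mul_div_cancel₀ _ (hw i hi).ne']
    _ ≤ ∑ i ∈ s, w i • (x i / w i) ^ p := jensen
    _ = ∑ i ∈ s, w i ^ (1 - p) * x i ^ p := by
        refine sum_congr rfl fun i hi => ?_
        rw [smul_eq_mul, div_rpow (hx i hi) (hw i hi).le, rpow_sub (hw i hi), rpow_one]
        ring

theorem rpow_sum_sq_half_le_rpow_sum {ι : Type*} (s : Finset ι) {p : ℝ} (hp : 0 ≤ p)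
    {x : ι → ℝ} (hx : ∀ i ∈ s, 0 ≤ x i) :
    (∑ i ∈ s, x i ^ 2) ^ (p / 2) ≤ (∑ i ∈ s, x i) ^ p := by
  have hsum : 0 ≤ ∑ i ∈ s, x i := sum_nonneg hx
  calc (∑ i ∈ s, x i ^ 2) ^ (p / 2)
      ≤ ((∑ i ∈ s, x i) ^ (2 : ℝ)) ^ (p / 2) := by
        rw [rpow_two]
        exact rpow_le_rpow (sum_nonneg fun i _ => sq_nonneg (x i))
          (sum_sq_le_sq_sum_of_nonneg hx) (by linarith)
    _ = (∑ i ∈ s, x i) ^ p := by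
        rw [← rpow_mul hsum]
        ring_nf

end Real

theorem stmt1 (p q r s l m : ℝ) (hp : 1 < p) (hq : 0 ≤ q) (hr : 0 ≤ r) (hs : 0 ≤ s)
    (hl : 0 < l) (hm : 0 < m) (hlm : l + m < 1) :
    (q ^ 2 + r ^ 2 + s ^ 2) ^ (p / 2) ≤
      (1 - l - m) ^ (1 - p) * q ^ p + l ^ (1 - p) * r ^ p + m ^ (1 - p) * s ^ p := by
  let x : Fin 3 → ℝ := ![q, r, s]
  let w : Fin 3 → ℝ := ![1 - l - m, l, m]
  have hx : ∀ i ∈ univ, 0 ≤ x i := by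
    intro i _
    fin_cases i <;> assumption
  have hw : ∀ i ∈ univ, 0 < w i := by
    intro i _
    fin_cases i <;> simp [w] <;> linarith
  have hw₁ : ∑ i, w i = 1 := by
    simp only [w, Fin.sum_univ_three, Matrix.cons_val_zero, Matrix.cons_val_one, Matrix.cons_val]
    ring
  have key := (Real.rpow_sum_sq_half_le_rpow_sum univ (by linarith) hx).trans
    (Real.rpow_sum_le_sum_rpow_one_sub_mul_rpow univ hp.le hw hw₁ hx)
  simpa [x, w, Fin.sum_univ_three] using key
end

section
/- Let Ω = (-π/2, π/2) × ℝ ⊂ ℝ². For every C¹ function u with compact support in Ω, (1/4) ∫_Ω u(x,y)² / cos²(x) dx dy ≤ ∫_Ω |∇u(x,y)|² dx dy. -/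
open Real MeasureTheory

/-!
If `φ` is `C¹` on an open set `U` and `w ≤ ∂ᵥφ - φ²` there, then for `u ∈ C¹_c(U)` expanding
`0 ≤ (∂ᵥu + φ u)²` gives `w u² ≤ (∂ᵥu)² + ∂ᵥ(φ u²)`, and the last term integrates to zero.
On the strip take `v = e₀` and `φ = tan x / 2 = -½ ∂ₓ log (e^y cos x)`: then
`∂ᵥφ - φ² = 1 / (4 cos² x) + 1 / 4`, and finally `(∂ᵥu)² ≤ ‖∇u‖²`.
-/

section

variable {E : Type*} [NormedAddCommGroup E] [NormedSpace ℝ E]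

theorem ContDiffOn.contDiff_mul_of_tsupport_subset {U : Set E} (hU : IsOpen U)
    {n : WithTop ℕ∞} {φ u : E → ℝ}
    (hφ : ContDiffOn ℝ n φ U) (hu : ContDiff ℝ n u) (hsupp : tsupport u ⊆ U) :
    ContDiff ℝ n fun x => φ x * u x := by
  refine contDiff_iff_contDiffAt.2 fun x => ?_
  by_cases hx : x ∈ tsupport u
  · exact (hφ.contDiffAt (hU.mem_nhds (hsupp hx))).mul hu.contDiffAt
  · refine contDiffAt_const (c := (0 : ℝ)).congr_of_eventuallyEq ?_
    filter_upwards [notMem_tsupport_iff_eventuallyEq.1 hx] with y hy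
    simp [hy]

theorem mul_sq_le_fderiv_sq_add_fderiv_mul_sq {U : Set E} (hU : IsOpen U) {φ u w : E → ℝ}
    (hφ : ContDiffOn ℝ 1 φ U) {v : E} (hw : ∀ x ∈ U, w x ≤ fderiv ℝ φ x v - φ x ^ 2)
    (hu : ContDiff ℝ 1 u) (hsupp : tsupport u ⊆ U) (x : E) :
    w x * u x ^ 2 ≤ fderiv ℝ u x v ^ 2 + fderiv ℝ (fun y => φ y * u y ^ 2) x v := by
  have hsupp2 : tsupport (fun x => u x ^ 2) ⊆ U :=
    (tsupport_comp_subset (g := fun t : ℝ => t ^ 2) (zero_pow two_ne_zero) u).trans hsupp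
  by_cases hx : x ∈ U
  · have hφx : HasFDerivAt φ (fderiv ℝ φ x) x :=
      ((hφ.contDiffAt (hU.mem_nhds hx)).differentiableAt one_ne_zero).hasFDerivAt
    have hux := (hu.differentiable one_ne_zero x).hasFDerivAt.pow 2
    rw [(hφx.fun_mul hux).fderiv]
    simp only [add_apply, smul_apply, smul_eq_mul, nsmul_eq_mul, Nat.cast_ofNat,
      Nat.add_one_sub_one, pow_one]
    linear_combination mul_le_mul_of_nonneg_right (hw x hx) (sq_nonneg (u x)) +
      sq_nonneg (fderiv ℝ u x v + φ x * u x)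
  · have hgx : fderiv ℝ (fun y => φ y * u y ^ 2) x = 0 := image_eq_zero_of_notMem_tsupport
      fun h => hx ((tsupport_mul_subset_right.trans hsupp2) (tsupport_fderiv_subset ℝ h))
    simp [hgx, image_eq_zero_of_notMem_tsupport fun h => hx (hsupp h), sq_nonneg]

variable [FiniteDimensional ℝ E] [MeasurableSpace E] [BorelSpace E] {μ : Measure E}
  [μ.IsAddHaarMeasure]

theorem integral_fderiv_apply_eq_zero {g : E → ℝ} (hg : ContDiff ℝ 1 g)
    (hcs : HasCompactSupport g) (v : E) : ∫ x, fderiv ℝ g x v ∂μ = 0 := by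
  have hdg : Integrable (fun x => fderiv ℝ g x v) μ :=
    ((hg.continuous_fderiv one_ne_zero).clm_apply continuous_const).integrable_of_hasCompactSupport
      (hcs.fderiv_apply (𝕜 := ℝ) v)
  have h := integral_mul_fderiv_eq_neg_fderiv_mul_of_integrable (f := fun _ => (1 : ℝ)) (g := g)
    (by simp) (by simpa using hdg)
    (by simpa using hg.continuous.integrable_of_hasCompactSupport hcs)
    (fun x _ => differentiableAt_const _) (fun x _ => hg.differentiable one_ne_zero x)
  simpa using h

theorem integral_mul_sq_le_integral_fderiv_sq {U : Set E} (hU : IsOpen U) {φ u w : E → ℝ}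
    (hφ : ContDiffOn ℝ 1 φ U) {v : E}
    (hw_nonneg : ∀ x, 0 ≤ w x) (hw : ∀ x ∈ U, w x ≤ fderiv ℝ φ x v - φ x ^ 2)
    (hu : ContDiff ℝ 1 u) (hcs : HasCompactSupport u) (hsupp : tsupport u ⊆ U) :
    ∫ x, w x * u x ^ 2 ∂μ ≤ ∫ x, fderiv ℝ u x v ^ 2 ∂μ := by
  set g : E → ℝ := fun x => φ x * u x ^ 2
  have hsupp2 : tsupport (fun x => u x ^ 2) ⊆ U :=
    (tsupport_comp_subset (g := fun t : ℝ => t ^ 2) (zero_pow two_ne_zero) u).trans hsupp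
  have hg : ContDiff ℝ 1 g := hφ.contDiff_mul_of_tsupport_subset hU (hu.pow 2) hsupp2
  have hg_cs : HasCompactSupport g :=
    (hcs.comp_left (g := fun t : ℝ => t ^ 2) (zero_pow two_ne_zero)).mul_left
  have hdu_cs : HasCompactSupport fun x => fderiv ℝ u x v := hcs.fderiv_apply (𝕜 := ℝ) v
  have hdu_sq_cs : HasCompactSupport fun x => fderiv ℝ u x v ^ 2 :=
    hdu_cs.comp_left (g := fun t : ℝ => t ^ 2) (zero_pow two_ne_zero)
  have hdu_sq : Integrable (fun x => fderiv ℝ u x v ^ 2) μ :=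
    (((hu.continuous_fderiv one_ne_zero).clm_apply continuous_const).pow 2
      ).integrable_of_hasCompactSupport hdu_sq_cs
  have hdg : Integrable (fun x => fderiv ℝ g x v) μ :=
    ((hg.continuous_fderiv one_ne_zero).clm_apply continuous_const).integrable_of_hasCompactSupport
      (hg_cs.fderiv_apply (𝕜 := ℝ) v)
  calc ∫ x, w x * u x ^ 2 ∂μ ≤ ∫ x, (fderiv ℝ u x v ^ 2 + fderiv ℝ g x v) ∂μ :=
        integral_mono_of_nonneg (.of_forall fun x => mul_nonneg (hw_nonneg x) (sq_nonneg _))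
          (hdu_sq.add hdg)
          (.of_forall (mul_sq_le_fderiv_sq_add_fderiv_mul_sq hU hφ hw hu hsupp))
    _ = ∫ x, fderiv ℝ u x v ^ 2 ∂μ := by
        rw [integral_add hdu_sq hdg, integral_fderiv_apply_eq_zero hg hg_cs, add_zero]

end

theorem ContinuousLinearMap.apply_sq_le_opNorm_sq {E : Type*} [SeminormedAddCommGroup E]
    [NormedSpace ℝ E] (L : E →L[ℝ] ℝ) {v : E} (hv : ‖v‖ ≤ 1) : L v ^ 2 ≤ ‖L‖ ^ 2 := by
  rw [← sq_abs, ← Real.norm_eq_abs]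
  gcongr
  exact L.le_of_opNorm_le_of_le le_rfl hv |>.trans_eq (mul_one _)

theorem norm_gradient_eq_norm_fderiv {F : Type*} [NormedAddCommGroup F] [InnerProductSpace ℝ F]
    [CompleteSpace F] (f : F → ℝ) (x : F) : ‖gradient f x‖ = ‖fderiv ℝ f x‖ := by
  rw [← toDual_gradient, LinearIsometryEquiv.norm_map]

theorem one_div_four_mul_cos_sq_le {x : ℝ} (hx : cos x ≠ 0) :
    1 / (4 * cos x ^ 2) ≤ 2⁻¹ * (1 / cos x ^ 2) - (2⁻¹ * tan x) ^ 2 := by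
  have h : 2⁻¹ * (1 / cos x ^ 2) - (2⁻¹ * tan x) ^ 2 - 1 / (4 * cos x ^ 2) = 1 / 4 := by
    rw [tan_eq_sin_div_cos]
    field_simp
    linear_combination (-4) * sin_sq_add_cos_sq x
  linarith

section

variable {ι : Type*} [Fintype ι] (i : ι)

theorem hasFDerivAt_tan_apply {z : EuclideanSpace ℝ ι} (hz : cos (z i) ≠ 0) :
    HasFDerivAt (fun y : EuclideanSpace ℝ ι => tan (y i))
      ((1 / cos (z i) ^ 2) • EuclideanSpace.proj (𝕜 := ℝ) i) z :=
  (hasDerivAt_tan hz).comp_hasFDerivAt (f := fun y : EuclideanSpace ℝ ι => y i) z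
    (EuclideanSpace.proj (𝕜 := ℝ) i).hasFDerivAt

theorem contDiffOn_tan_apply {n : WithTop ℕ∞} :
    ContDiffOn ℝ n (fun y : EuclideanSpace ℝ ι => tan (y i)) {y | cos (y i) ≠ 0} :=
  fun z hz => (contDiffAt_tan.2 hz |>.comp (f := fun y : EuclideanSpace ℝ ι => y i) z
    (EuclideanSpace.proj (𝕜 := ℝ) i).contDiff.contDiffAt).contDiffWithinAt

theorem integral_one_div_four_mul_cos_sq_mul_sq_le [DecidableEq ι] {u : EuclideanSpace ℝ ι → ℝ}
    (hu : ContDiff ℝ 1 u) (hcs : HasCompactSupport u) (hsupp : tsupport u ⊆ {z | cos (z i) ≠ 0}) :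
    ∫ z, 1 / (4 * cos (z i) ^ 2) * u z ^ 2 ≤
      ∫ z, fderiv ℝ u z (EuclideanSpace.single i 1) ^ 2 := by
  have hU : IsOpen {z : EuclideanSpace ℝ ι | cos (z i) ≠ 0} :=
    isOpen_ne_fun (continuous_cos.comp (EuclideanSpace.proj (𝕜 := ℝ) i).continuous)
      continuous_const
  have hφ : ContDiffOn ℝ 1 (fun z : EuclideanSpace ℝ ι => 2⁻¹ * tan (z i)) {z | cos (z i) ≠ 0} :=
    (contDiffOn_tan_apply i).const_smul (2⁻¹ : ℝ)
  refine integral_mul_sq_le_integral_fderiv_sq hU hφ (fun z => by positivity) (fun z hz => ?_)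
    hu hcs hsupp
  rw [((hasFDerivAt_tan_apply i hz).const_mul 2⁻¹).fderiv]
  simpa using one_div_four_mul_cos_sq_le hz

end

theorem stmt2 (u : EuclideanSpace ℝ (Fin 2) → ℝ)
    (hu : ContDiff ℝ 1 u) (hcs : HasCompactSupport u)
    (hsupp : tsupport u ⊆ {z : EuclideanSpace ℝ (Fin 2) | z 0 ∈ Set.Ioo (-(π/2)) (π/2)}) :
    (1/4) * ∫ z in {z : EuclideanSpace ℝ (Fin 2) | z 0 ∈ Set.Ioo (-(π/2)) (π/2)},
        u z ^ 2 / Real.cos (z 0) ^ 2 ≤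
      ∫ z in {z : EuclideanSpace ℝ (Fin 2) | z 0 ∈ Set.Ioo (-(π/2)) (π/2)},
        ‖gradient u z‖ ^ 2 := by
  set S : Set (EuclideanSpace ℝ (Fin 2)) := {z | z 0 ∈ Set.Ioo (-(π/2)) (π/2)}
  have hu_off : ∀ z ∉ S, u z = 0 := fun z hz =>
    image_eq_zero_of_notMem_tsupport fun h => hz (hsupp h)
  have hdu_off : ∀ z ∉ S, fderiv ℝ u z = 0 := fun z hz =>
    image_eq_zero_of_notMem_tsupport fun h => hz (hsupp (tsupport_fderiv_subset ℝ h))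
  have hdu_cs : HasCompactSupport fun z => ‖fderiv ℝ u z‖ ^ 2 :=
    (hcs.fderiv (𝕜 := ℝ)).norm.comp_left (g := fun t : ℝ => t ^ 2) (zero_pow two_ne_zero)
  calc (1/4) * ∫ z in S, u z ^ 2 / cos (z 0) ^ 2
      = ∫ z, 1 / (4 * cos (z 0) ^ 2) * u z ^ 2 := by
        rw [setIntegral_eq_integral_of_forall_compl_eq_zero fun z hz => by simp [hu_off z hz],
          ← integral_const_mul]
        congr 1 with z
        ring
    _ ≤ ∫ z, fderiv ℝ u z (EuclideanSpace.single 0 1) ^ 2 :=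
        integral_one_div_four_mul_cos_sq_mul_sq_le 0 hu hcs
          (hsupp.trans fun z hz => (cos_pos_of_mem_Ioo hz).ne')
    _ ≤ ∫ z, ‖fderiv ℝ u z‖ ^ 2 :=
        integral_mono_of_nonneg (.of_forall fun z => sq_nonneg _)
          (((hu.continuous_fderiv one_ne_zero).norm.pow 2).integrable_of_hasCompactSupport hdu_cs)
          (.of_forall fun z => (fderiv ℝ u z).apply_sq_le_opNorm_sq (by simp))
    _ = ∫ z in S, ‖gradient u z‖ ^ 2 := by
        simp_rw [norm_gradient_eq_norm_fderiv]
        exact (setIntegral_eq_integral_of_forall_compl_eq_zero fun z hz => by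
          simp [hdu_off z hz]).symm
end

section
/- Let p > 1, α ∈ ℝ with α ≠ 0, and let g be a positive C² function on an open set Ω ⊆ ℝ^N such that g^α is p-harmonic, i.e. div(|∇(g^α)|^{p-2} ∇(g^α)) = 0 on Ω. Then g·Δ_p g = (p-1)(1-α)|∇g|^p on Ω, where Δ_p g := div(|∇g|^{p-2}∇g). -/
open Real

/-- The Euclidean `p`-Laplacian `div(|∇g|^{p-2} ∇g)` at a point. -/
noncomputable def pLaplacian {N : ℕ} (p : ℝ) (g : EuclideanSpace ℝ (Fin N) → ℝ)
    (ξ : EuclideanSpace ℝ (Fin N)) : ℝ :=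
  ∑ i, fderiv ℝ (fun x => ‖gradient g x‖ ^ (p - 2) * gradient g x i) ξ
    (EuclideanSpace.single i 1)

/-! With `u = g ^ α` the chain rule gives `∇u = α g^{α-1} ∇g`, so the `p`-flux of `u` is
`|α|^{p-2} α g^β |∇g|^{p-2} ∇g` with `β = (α - 1)(p - 1)`. The product rule for the divergence
turns this into `Δ_p u = |α|^{p-2} α g^{β-1} (g Δ_p g + β |∇g|^p)`, and the prefactor is nonzero
because `g > 0` and `α ≠ 0`. -/

section Gradient

variable {F : Type*} [NormedAddCommGroup F] [InnerProductSpace ℝ F]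

theorem inner_self_smul_norm_rpow {v : F} (hv : v ≠ 0) (p : ℝ) :
    inner ℝ v (‖v‖ ^ (p - 2) • v) = ‖v‖ ^ p := by
  rw [real_inner_smul_right, real_inner_self_eq_norm_sq, ← rpow_natCast,
    ← rpow_add (norm_pos_iff.mpr hv)]
  norm_num

variable [CompleteSpace F]

theorem gradient_rpow_const {f : F → ℝ} {x : F} (hf : DifferentiableAt ℝ f x) (hx : f x ≠ 0)
    (α : ℝ) : gradient (fun y => f y ^ α) x = (α * f x ^ (α - 1)) • gradient f x := by
  rw [gradient, gradient, (hf.hasFDerivAt.rpow_const (Or.inl hx)).fderiv, map_smul]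

theorem ContDiffAt.gradient {f : F → ℝ} {x : F} {n : WithTop ℕ∞} (hf : ContDiffAt ℝ (n + 1) f x) :
    ContDiffAt ℝ n (gradient f) x :=
  (InnerProductSpace.toDual ℝ F).symm.contDiff.comp_contDiffAt x (hf.fderiv_right le_rfl)

noncomputable def pFlux (p : ℝ) (f : F → ℝ) (x : F) : F :=
  ‖gradient f x‖ ^ (p - 2) • gradient f x

theorem pFlux_rpow_const {f : F → ℝ} {x : F} (hf : DifferentiableAt ℝ f x) (hx : 0 < f x)
    (p α : ℝ) : pFlux p (fun y => f y ^ α) x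
      = (|α| ^ (p - 2) * α * f x ^ ((α - 1) * (p - 1))) • pFlux p f x := by
  have hpow : 0 < f x ^ (α - 1) := rpow_pos_of_pos hx _
  rw [pFlux, pFlux, gradient_rpow_const hf hx.ne', norm_smul, smul_smul, Real.norm_eq_abs,
    abs_mul, abs_of_pos hpow, mul_rpow (by positivity) (norm_nonneg _),
    mul_rpow (abs_nonneg _) hpow.le, ← rpow_mul hx.le, smul_smul]
  congr 1
  have : (α - 1) * (p - 1) = (α - 1) * (p - 2) + (α - 1) := by ring
  rw [this, rpow_add hx]
  ring

theorem differentiableAt_pFlux {f : F → ℝ} {x : F} (hf : ContDiffAt ℝ 2 f x)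
    (hx : gradient f x ≠ 0) (p : ℝ) : DifferentiableAt ℝ (pFlux p f) x := by
  have hgrad : ContDiffAt ℝ 1 (gradient f) x := hf.gradient
  have hnorm : DifferentiableAt ℝ (fun y => ‖gradient f y‖) x :=
    (hgrad.norm ℝ hx).differentiableAt one_ne_zero
  exact (hnorm.rpow_const (Or.inl (norm_ne_zero_iff.mpr hx))).smul
    (hgrad.differentiableAt one_ne_zero)

end Gradient

section Divergence

variable {N : ℕ}

theorem fderiv_apply_single (f : EuclideanSpace ℝ (Fin N) → ℝ) (x : EuclideanSpace ℝ (Fin N))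
    (i : Fin N) : fderiv ℝ f x (EuclideanSpace.single i 1) = gradient f x i := by
  rw [← inner_gradient_left, EuclideanSpace.inner_single_right]
  simp

noncomputable def divergence (V : EuclideanSpace ℝ (Fin N) → EuclideanSpace ℝ (Fin N))
    (x : EuclideanSpace ℝ (Fin N)) : ℝ :=
  ∑ i, fderiv ℝ (fun y => V y i) x (EuclideanSpace.single i 1)

theorem pLaplacian_eq_divergence_pFlux (p : ℝ) (f : EuclideanSpace ℝ (Fin N) → ℝ) :
    pLaplacian p f = divergence (pFlux p f) :=
  rfl

theorem Filter.EventuallyEq.divergence_eq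
    {V W : EuclideanSpace ℝ (Fin N) → EuclideanSpace ℝ (Fin N)} {x : EuclideanSpace ℝ (Fin N)}
    (h : V =ᶠ[nhds x] W) : divergence V x = divergence W x := by
  unfold divergence
  congr! 2 with i
  exact (h.fun_comp (· i)).fderiv_eq

theorem divergence_smul {h : EuclideanSpace ℝ (Fin N) → ℝ}
    {V : EuclideanSpace ℝ (Fin N) → EuclideanSpace ℝ (Fin N)} {x : EuclideanSpace ℝ (Fin N)}
    (hh : DifferentiableAt ℝ h x) (hV : DifferentiableAt ℝ V x) :
    divergence (fun y => h y • V y) x = h x * divergence V x + inner ℝ (gradient h x) (V x) := by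
  have hVi (i : Fin N) : DifferentiableAt ℝ (fun y => V y i) x :=
    (EuclideanSpace.proj (𝕜 := ℝ) i).differentiableAt.comp x hV
  have hterm (i : Fin N) : fderiv ℝ (fun y => (h y • V y) i) x (EuclideanSpace.single i 1)
      = h x * fderiv ℝ (fun y => V y i) x (EuclideanSpace.single i 1) + gradient h x i * V x i := by
    simp only [PiLp.smul_apply, smul_eq_mul, fderiv_fun_mul hh (hVi i),
      add_apply, smul_apply, fderiv_apply_single]
    ring
  simp only [divergence, hterm, Finset.sum_add_distrib, Finset.mul_sum, PiLp.inner_apply,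
    Real.inner_apply]

theorem divergence_const_smul (c : ℝ) {V : EuclideanSpace ℝ (Fin N) → EuclideanSpace ℝ (Fin N)}
    {x : EuclideanSpace ℝ (Fin N)} (hV : DifferentiableAt ℝ V x) :
    divergence (fun y => c • V y) x = c * divergence V x := by
  simpa using divergence_smul (differentiableAt_const c) hV

end Divergence

theorem pLaplacian_rpow_const {N : ℕ} {g : EuclideanSpace ℝ (Fin N) → ℝ}
    {ξ : EuclideanSpace ℝ (Fin N)} (hg : ContDiffAt ℝ 2 g ξ) (hpos : 0 < g ξ)
    (hgrad : gradient g ξ ≠ 0) (p α : ℝ) :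
    pLaplacian p (fun x => g x ^ α) ξ = |α| ^ (p - 2) * α * g ξ ^ ((α - 1) * (p - 1) - 1)
      * (g ξ * pLaplacian p g ξ + (α - 1) * (p - 1) * ‖gradient g ξ‖ ^ p) := by
  set β := (α - 1) * (p - 1)
  have hdiff : ∀ᶠ x in nhds ξ, DifferentiableAt ℝ g x :=
    (hg.eventually (by simp)).mono fun x hx => hx.differentiableAt two_ne_zero
  have hflux : pFlux p (fun x => g x ^ α) =ᶠ[nhds ξ]
      fun x => (|α| ^ (p - 2) * α) • (g x ^ β • pFlux p g x) := by
    filter_upwards [hdiff, continuousAt_const.eventually_lt hg.continuousAt hpos] with x hdx hx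
    rw [pFlux_rpow_const hdx hx, smul_smul]
  have hgβ : DifferentiableAt ℝ (fun x => g x ^ β) ξ :=
    (hg.differentiableAt two_ne_zero).rpow_const (Or.inl hpos.ne')
  have hΦ := differentiableAt_pFlux hg hgrad p
  have hgβΦ : DifferentiableAt ℝ (fun x => g x ^ β • pFlux p g x) ξ := hgβ.smul hΦ
  rw [pLaplacian_eq_divergence_pFlux, hflux.divergence_eq, divergence_const_smul _ hgβΦ,
    divergence_smul hgβ hΦ, gradient_rpow_const (hg.differentiableAt two_ne_zero) hpos.ne',
    real_inner_smul_left, pFlux, inner_self_smul_norm_rpow hgrad,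
    ← pLaplacian_eq_divergence_pFlux, rpow_sub_one hpos.ne']
  field_simp

theorem stmt10_general (N : ℕ) (p α : ℝ) (hα : α ≠ 0)
    (Ω : Set (EuclideanSpace ℝ (Fin N))) (hΩ : IsOpen Ω)
    (g : EuclideanSpace ℝ (Fin N) → ℝ) (hg : ContDiffOn ℝ 2 g Ω)
    (hgpos : ∀ ξ ∈ Ω, 0 < g ξ) (hgrad : ∀ ξ ∈ Ω, gradient g ξ ≠ 0)
    (hharm : ∀ ξ ∈ Ω, pLaplacian p (fun x => g x ^ α) ξ = 0) :
    ∀ ξ ∈ Ω, g ξ * pLaplacian p g ξ = (p - 1) * (1 - α) * ‖gradient g ξ‖ ^ p := by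
  intro ξ hξ
  have hexpand := pLaplacian_rpow_const (hg.contDiffAt (hΩ.mem_nhds hξ)) (hgpos ξ hξ)
    (hgrad ξ hξ) p α
  have hfactor : |α| ^ (p - 2) * α * g ξ ^ ((α - 1) * (p - 1) - 1) ≠ 0 := by
    have := hgpos ξ hξ
    positivity
  rw [hharm ξ hξ, eq_comm, mul_eq_zero, or_iff_right hfactor] at hexpand
  linear_combination hexpand

theorem stmt10 (N : ℕ) (p α : ℝ) (hp : 1 < p) (hα : α ≠ 0)
    (Ω : Set (EuclideanSpace ℝ (Fin N))) (hΩ : IsOpen Ω)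
    (g : EuclideanSpace ℝ (Fin N) → ℝ) (hg : ContDiffOn ℝ 2 g Ω)
    (hgpos : ∀ ξ ∈ Ω, 0 < g ξ) (hgrad : ∀ ξ ∈ Ω, gradient g ξ ≠ 0)
    (hharm : ∀ ξ ∈ Ω, pLaplacian p (fun x => g x ^ α) ξ = 0) :
    ∀ ξ ∈ Ω, g ξ * pLaplacian p g ξ = (p - 1) * (1 - α) * ‖gradient g ξ‖ ^ p :=
  stmt10_general N p α hα Ω hΩ g hg hgpos hgrad hharm
end
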